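/- Let (X,Σ_X) and (Y,Σ_Y) be measurable spaces, f₁,…,f_k : X → Y measurable maps, and λ₁,…,λ_k ∈ ℝ such that for every x ∈ X the formal linear combination Σᵢ λᵢ·δ_{fᵢ(x)} is the zero element of the free real vector space on Y (equivalently, for every y ∈ Y, Σ_{i : fᵢ(x)=y} λᵢ = 0). Then for every finite signed measure μ on X, the signed measure Σᵢ λᵢ·(fᵢ)_*μ on Y is zero. -/

import Mathlib

/-!
For a finite positive measure `ν`, `(fᵢ)_*ν (A) = ∫ 1_A ∘ fᵢ dν`, so `Σ λᵢ (fᵢ)_*ν (A)` is the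
integral of `x ↦ Σ λᵢ 1_A(fᵢ x)`, which is the pairing of the zero combination `Σ λᵢ δ_{fᵢ x}`
with `1_A` and hence vanishes pointwise. The map `μ ↦ Σ λᵢ (fᵢ)_*μ` is linear, so the Jordan
decomposition `μ = μ⁺ - μ⁻` extends the vanishing to signed measures.
-/

open MeasureTheory

theorem Finset.sum_smul_comp_eq_zero_of_sum_ite_eq_zero {ι Y R M : Type*} [Fintype ι] [DecidableEq Y]
    [Semiring R] [AddCommMonoid M] [Module R M] (p : ι → Y) (lam : ι → R)
    (h : ∀ y, (∑ i, if p i = y then lam i else 0) = 0) (g : Y → M) :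
    ∑ i, lam i • g (p i) = 0 := by
  have fiber (y : Y) :
      ∑ i with p i = y, lam i • g (p i) = (∑ i, if p i = y then lam i else 0) • g y := by
    rw [← Finset.sum_filter, Finset.sum_smul]
    exact Finset.sum_congr rfl fun i hi => by rw [(Finset.mem_filter.1 hi).2]
  rw [← Finset.sum_fiberwise_of_maps_to (g := p) (t := Finset.univ.image p)
    fun i _ => Finset.mem_image_of_mem p (Finset.mem_univ i)]
  simp only [fiber, h, zero_smul, Finset.sum_const_zero]

theorem MeasureTheory.Measure.sum_smul_map_toSignedMeasure_eq_zero {X Y ι : Type*}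
    [MeasurableSpace X] [MeasurableSpace Y] [Fintype ι] [DecidableEq Y] {f : ι → X → Y}
    (hf : ∀ i, Measurable (f i)) {lam : ι → ℝ}
    (hzero : ∀ x y, (∑ i, if f i x = y then lam i else 0) = 0)
    (ν : Measure X) [IsFiniteMeasure ν] :
    ∑ i, lam i • ν.toSignedMeasure.map (f i) = 0 := by
  ext A hA
  have pullback (i : ι) :
      ν.toSignedMeasure.map (f i) A = ∫ x, A.indicator 1 (f i x) ∂ν := by
    rw [VectorMeasure.map_apply _ (hf i) hA, toSignedMeasure_apply_measurable (hf i hA),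
      ← integral_indicator_one (hf i hA)]
    rfl
  have integrable (i : ι) : Integrable (fun x => lam i • A.indicator (1 : Y → ℝ) (f i x)) ν :=
    ((integrable_const (μ := ν) (1 : ℝ)).indicator (hf i hA)).smul (lam i)
  calc (∑ i, lam i • ν.toSignedMeasure.map (f i)) A
      = ∑ i, lam i • ∫ x, A.indicator 1 (f i x) ∂ν := by
        simp only [_root_.sum_apply, FunLike.coe_smul, Pi.smul_apply, pullback]
    _ = ∫ x, ∑ i, lam i • A.indicator (1 : Y → ℝ) (f i x) ∂ν := by
        rw [integral_finsetSum _ fun i _ => integrable i]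
        simp only [integral_smul]
    _ = (0 : SignedMeasure Y) A := by
        simp only [Finset.sum_smul_comp_eq_zero_of_sum_ite_eq_zero _ _ (hzero _), integral_zero,
          zero_apply]

open scoped Classical in
/-- Generalized Zastrow lemma: if the formal combination `Σ λᵢ δ_{fᵢ(x)}` vanishes for
every `x`, then `Σ λᵢ (fᵢ)_* μ = 0` for every finite signed measure `μ`. -/
theorem stmt10 {X Y : Type*} [MeasurableSpace X] [MeasurableSpace Y]
    (k : ℕ) (f : Fin k → X → Y) (hf : ∀ i, Measurable (f i))
    (lam : Fin k → ℝ)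
    (hzero : ∀ (x : X) (y : Y), (∑ i, if f i x = y then lam i else 0) = 0)
    (μ : SignedMeasure X) :
    (∑ i, lam i • (μ.map (f i))) = 0 := by
  let L : SignedMeasure X →ₗ[ℝ] SignedMeasure Y := ∑ i, lam i • VectorMeasure.mapₗ (f i)
  have hL (ν : Measure X) [IsFiniteMeasure ν] : L ν.toSignedMeasure = 0 := by
    simpa [L] using Measure.sum_smul_map_toSignedMeasure_eq_zero hf hzero ν
  have hLμ : L μ = 0 := by
    rw [← μ.toSignedMeasure_toJordanDecomposition, JordanDecomposition.toSignedMeasure, map_sub,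
      hL, hL, sub_zero]
  simpa [L] using hLμ
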